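/- Let A ∈ ℝ^{m×n} and B ∈ ℝ^{m×d}, and let OPT = inf over C' ∈ ℝ^{m×(n+d)} with rank(C') ≤ n of ‖C' − [A, B]‖_F. Then for every δ > 0 there exist X ∈ ℝ^{n×d} and Â ∈ ℝ^{m×n} such that ‖[Â, ÂX] − [A, B]‖_F ≤ OPT + δ. -/

import Mathlib

/-!
A matrix `C` of rank at most `n` factors as `C = U * [V₁, V₂]` with `U` having `n` columns.
Whenever `M` is invertible, `[U M, (U M)(M⁻¹ V₂)] = U * [M, V₂]` is a total least squares
candidate, and invertible matrices are dense (the spectrum of `-V₁` is finite, so `V₁ + t • 1`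
is invertible for arbitrarily small `t`). Hence every rank-`n` approximation, in particular a
near-optimal one, is a limit of candidates, and continuity of the Frobenius norm finishes.
-/

open Matrix

noncomputable def frobNorm {m n : Type*} [Fintype m] [Fintype n]
    (M : Matrix m n ℝ) : ℝ :=
  Real.sqrt (∑ i, ∑ j, (M i j) ^ 2)

theorem continuous_frobNorm {m n : Type*} [Fintype m] [Fintype n] :
    Continuous (frobNorm : Matrix m n ℝ → ℝ) := by
  unfold frobNorm; fun_prop

@[fun_prop]
theorem Continuous.matrix_fromCols {X R m n₁ n₂ : Type*} [TopologicalSpace X] [TopologicalSpace R]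
    {A : X → Matrix m n₁ R} {B : X → Matrix m n₂ R} (hA : Continuous A) (hB : Continuous B) :
    Continuous fun x ↦ Matrix.fromCols (A x) (B x) :=
  continuous_matrix fun i j ↦ by cases j <;> simp [hA.matrix_elem, hB.matrix_elem]

namespace Matrix

theorem exists_mul_eq_of_rank_le {m κ K : Type*} [Fintype κ] [DecidableEq κ] [Field K] {n : ℕ}
    (C : Matrix m κ K) (hC : C.rank ≤ n) :
    ∃ (U : Matrix m (Fin n) K) (V : Matrix (Fin n) κ K), U * V = C := by
  obtain ⟨i, hi⟩ := (finrank_le_iff_exists_linearMap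
    (M := LinearMap.range C.mulVecLin) (M' := Fin n → K)).1 (by rwa [Module.finrank_fin_fun])
  obtain ⟨p, hp⟩ := LinearMap.exists_leftInverse_of_injective i (LinearMap.ker_eq_bot.2 hi)
  refine ⟨LinearMap.toMatrix' ((LinearMap.range C.mulVecLin).subtype ∘ₗ p),
    LinearMap.toMatrix' (i ∘ₗ C.mulVecLin.rangeRestrict), ?_⟩
  rw [← LinearMap.toMatrix'_comp, LinearMap.comp_assoc, ← LinearMap.comp_assoc _ i p, hp,
    LinearMap.id_comp, LinearMap.subtype_comp_codRestrict, ← toLin'_apply',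
    LinearMap.toMatrix'_toLin']

theorem dense_setOf_isUnit {m 𝕜 : Type*} [Fintype m] [DecidableEq m] [NontriviallyNormedField 𝕜]
    [CompleteSpace 𝕜] : Dense {M : Matrix m m 𝕜 | IsUnit M} := by
  intro V
  -- `r ∉ spectrum 𝕜 (-V)` means exactly that `V + r • 1` is invertible.
  have h0 : (0 : 𝕜) ∈ closure (spectrum 𝕜 (-V))ᶜ := (finite_spectrum (-V)).countable.dense_compl 𝕜 0
  simpa using map_mem_closure (f := fun r : 𝕜 ↦ V + r • 1) (t := {M | IsUnit M}) (by fun_prop) h0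
    fun r hr ↦ by simpa [spectrum.notMem_iff, Algebra.algebraMap_eq_smul_one, add_comm] using hr

theorem mem_closure_range_fromCols_mul_of_rank_le {m d 𝕜 : Type*} [Fintype d] [DecidableEq d]
    [NontriviallyNormedField 𝕜] [CompleteSpace 𝕜] {n : ℕ} (C : Matrix m (Fin n ⊕ d) 𝕜)
    (hC : C.rank ≤ n) :
    C ∈ closure (Set.range fun p : Matrix m (Fin n) 𝕜 × Matrix (Fin n) d 𝕜 ↦
      fromCols p.1 (p.1 * p.2)) := by
  obtain ⟨U, V, rfl⟩ := exists_mul_eq_of_rank_le C hC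
  rw [← fromCols_toCols V, mul_fromCols]
  refine map_mem_closure (f := fun M ↦ fromCols (U * M) (U * V.toCols₂)) (by fun_prop)
    (dense_setOf_isUnit _) fun M (hM : IsUnit M) ↦ ⟨(U * M, M⁻¹ * V.toCols₂), ?_⟩
  simp [Matrix.mul_assoc, mul_nonsing_inv_cancel_left _ _ ((isUnit_iff_isUnit_det M).1 hM)]

end Matrix

/-- Main approximation guarantee with `ε = 0`: a total least squares solution exists
whose cost is within an arbitrarily small additive `δ` of the optimal rank-`n`
approximation cost `OPT`. -/
theorem total_least_squares_additive_approx
    (m n d : ℕ)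
    (A : Matrix (Fin m) (Fin n) ℝ) (B : Matrix (Fin m) (Fin d) ℝ) :
    ∀ δ : ℝ, 0 < δ →
      ∃ (X : Matrix (Fin n) (Fin d) ℝ) (Ahat : Matrix (Fin m) (Fin n) ℝ),
        frobNorm (Matrix.fromCols Ahat (Ahat * X) - Matrix.fromCols A B) ≤
          sInf {c : ℝ | ∃ C' : Matrix (Fin m) (Fin n ⊕ Fin d) ℝ, C'.rank ≤ n ∧
            c = frobNorm (C' - Matrix.fromCols A B)} + δ := by
  intro δ hδ
  set costs := {c : ℝ | ∃ C' : Matrix (Fin m) (Fin n ⊕ Fin d) ℝ, C'.rank ≤ n ∧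
    c = frobNorm (C' - Matrix.fromCols A B)}
  obtain ⟨_, ⟨C, hC, rfl⟩, hCδ⟩ :=
    Real.lt_sInf_add_pos (⟨_, 0, by simp, rfl⟩ : costs.Nonempty) hδ
  have hopen : IsOpen {M | frobNorm (M - fromCols A B) < sInf costs + δ} :=
    isOpen_lt (continuous_frobNorm.comp (continuous_sub_right _)) continuous_const
  obtain ⟨_, hlt, ⟨Ahat, X⟩, rfl⟩ :=
    mem_closure_iff.1 (mem_closure_range_fromCols_mul_of_rank_le C hC) _ hopen hCδ
  exact ⟨X, Ahat, hlt.le⟩
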